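/- Let $\vec a=(a_1,\dots,a_n)\in[1,\infty)^n$, $\vec p\in(0,\infty]^n$, $q\in[1,\infty]$ and $s\in\mathbb{Z}_+$. For a locally $q$-integrable function $g$ on $\mathbb{R}^n$, one has $\|g\|_{\mathcal L^{\vec a}_{\vec p,q,s}(\mathbb{R}^n)}=0$ if and only if $g$ coincides almost everywhere on $\mathbb{R}^n$ with a polynomial of degree at most $s$. -/

import Mathlib

/-!
Anisotropic balls are bounded, open neighbourhoods of their centres, so each ball `B` has
`0 < |B| < ∞` and `‖χ_B‖_{L^{p⃗}} < ∞`. Hence a vanishing Campanato norm makes `g` an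
`L^q(B)`-limit of polynomials of degree at most `s`; these form a finite-dimensional, hence
closed, subspace of `L^q(B)`, so `g` agrees a.e. on `B` with such a polynomial. Polynomials
agreeing a.e. near a point are equal by analyticity, so the polynomials found on the
exhausting balls `B(0, k + 1)` are all the same.
-/

open MeasureTheory ENNReal Filter

noncomputable section

/-- The anisotropic homogeneous quasi-norm associated with `a`. -/
def anorm {n : ℕ} (a x : Fin n → ℝ) : ℝ :=
  sInf {t : ℝ | 0 < t ∧ ∑ i, x i ^ 2 / t ^ (2 * a i) = 1}

/-- The anisotropic ball with center `x` and radius `r`. -/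
def aball {n : ℕ} (a x : Fin n → ℝ) (r : ℝ) : Set (Fin n → ℝ) :=
  {y | anorm a (y - x) < r}

/-- The collection `𝔅` of all anisotropic balls. -/
def aballs {n : ℕ} (a : Fin n → ℝ) : Set (Set (Fin n → ℝ)) :=
  {B | ∃ x r, 0 < r ∧ B = aball a x r}

/-- Iterated mixed-norm of a nonnegative function: integrate the first variable
with exponent `p 0` (essential supremum if `p 0 = ∞`), then recurse. -/
def mixedNormF : {n : ℕ} → (Fin n → ℝ≥0∞) → ((Fin n → ℝ) → ℝ≥0∞) → ℝ≥0∞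
  | 0, _, f => f fun i => i.elim0
  | _ + 1, p, f =>
    mixedNormF (fun i => p i.succ) fun y =>
      if p 0 = ∞ then essSup (fun t => f (Fin.cons t y)) volume
      else (∫⁻ t, f (Fin.cons t y) ^ (p 0).toReal) ^ (1 / (p 0).toReal)

/-- The mixed-norm Lebesgue quasi-norm `‖f‖_{L^{p⃗}(ℝⁿ)}`. -/
def mixedNorm {n : ℕ} (p : Fin n → ℝ≥0∞) (f : (Fin n → ℝ) → ℂ) : ℝ≥0∞ :=
  mixedNormF p fun x => (‖f x‖₊ : ℝ≥0∞)

/-- `‖χ_B‖_{L^{p⃗}(ℝⁿ)}`. -/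
def chiNorm {n : ℕ} (p : Fin n → ℝ≥0∞) (B : Set (Fin n → ℝ)) : ℝ≥0∞ :=
  mixedNormF p (B.indicator fun _ => 1)

/-- `P` is (the function given by) a polynomial on `ℝⁿ` of total degree at most `s`. -/
def IsPolyDeg {n : ℕ} (s : ℕ) (P : (Fin n → ℝ) → ℂ) : Prop :=
  ∃ Q : MvPolynomial (Fin n) ℂ, Q.totalDegree ≤ s ∧
    ∀ x, P x = MvPolynomial.eval (fun i => (x i : ℂ)) Q

/-- The anisotropic mixed-norm Campanato quasi-norm `‖g‖_{𝓛^{a⃗}_{p⃗,q,s}(ℝⁿ)}`. -/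
def campanatoNorm {n : ℕ} (a : Fin n → ℝ) (p : Fin n → ℝ≥0∞) (q : ℝ≥0∞) (s : ℕ)
    (g : (Fin n → ℝ) → ℂ) : ℝ≥0∞ :=
  ⨆ B ∈ aballs a, ⨅ P ∈ {P : (Fin n → ℝ) → ℂ | IsPolyDeg s P},
    volume B / chiNorm p B *
      (if q = ∞ then essSup (fun x => (‖g x - P x‖₊ : ℝ≥0∞)) (volume.restrict B)
       else ((volume B)⁻¹ * ∫⁻ x in B, (‖g x - P x‖₊ : ℝ≥0∞) ^ q.toReal) ^ (1 / q.toReal))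

/-- Local `q`-integrability on `ℝⁿ`. -/
def LocLp {n : ℕ} (q : ℝ≥0∞) (g : (Fin n → ℝ) → ℂ) : Prop :=
  ∀ K : Set (Fin n → ℝ), IsCompact K → MemLp g q (volume.restrict K)

/-- The homogeneous dimension `ν = a_1 + ⋯ + a_n`. -/
def nuTotal {n : ℕ} (a : Fin n → ℝ) : ℝ := ∑ i, a i

/-- `a₋ = min {a_1, …, a_n}`. -/
def aMin {n : ℕ} (a : Fin n → ℝ) : ℝ := ⨅ i, a i

/-- `p₋ = min {p_1, …, p_n}`. -/
def pMinE {n : ℕ} (p : Fin n → ℝ≥0∞) : ℝ≥0∞ := ⨅ i, p i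

/-- An anisotropic mixed-norm `(p⃗, r, s)`-atom supported on the anisotropic ball `B`. -/
structure IsAtomFn {n : ℕ} (a : Fin n → ℝ) (p : Fin n → ℝ≥0∞) (r : ℝ≥0∞) (s : ℕ)
    (f : (Fin n → ℝ) → ℂ) (B : Set (Fin n → ℝ)) : Prop where
  measurable : Measurable f
  ball_mem : B ∈ aballs a
  support_subset : Function.support f ⊆ B
  size : eLpNorm f r volume ≤ volume B ^ (1 / r).toReal / chiNorm p B
  moments : ∀ α : Fin n → ℕ, (∑ i, α i) ≤ s → (∫ x, f x * ∏ i, (x i : ℂ) ^ α i) = 0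

/-- The quantity `‖{∑_i [|λ_i| χ_{B_i} / ‖χ_{B_i}‖]^{p₋}}^{1/p₋}‖_{L^{p⃗}}` for a sequence. -/
def atomSeqNorm {n : ℕ} (p : Fin n → ℝ≥0∞) (lam : ℕ → ℂ) (B : ℕ → Set (Fin n → ℝ)) : ℝ≥0∞ :=
  mixedNormF p fun x =>
    (∑' i, ((‖lam i‖₊ : ℝ≥0∞) * (B i).indicator (fun _ => 1) x / chiNorm p (B i))
        ^ (pMinE p).toReal) ^ (1 / (pMinE p).toReal)

/-- The quantity `‖{∑_{i=1}^m [|λ_i| χ_{B_i} / ‖χ_{B_i}‖]^{p₋}}^{1/p₋}‖_{L^{p⃗}}`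
for a finite family. -/
def atomFinNorm {n : ℕ} (p : Fin n → ℝ≥0∞) {m : ℕ} (lam : Fin m → ℂ)
    (B : Fin m → Set (Fin n → ℝ)) : ℝ≥0∞ :=
  mixedNormF p fun x =>
    (∑ i, ((‖lam i‖₊ : ℝ≥0∞) * (B i).indicator (fun _ => 1) x / chiNorm p (B i))
        ^ (pMinE p).toReal) ^ (1 / (pMinE p).toReal)

/-- Tempered distributions on `ℝⁿ`. -/
abbrev TDist (n : ℕ) := SchwartzMap (Fin n → ℝ) ℂ →L[ℂ] ℂ

/-- `T = ∑_i λ_i a_i` in `𝒮'(ℝⁿ)` with the `a_i` being `(p⃗,r,s)`-atoms on balls `B i`. -/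
def HasAtomicRep {n : ℕ} (a : Fin n → ℝ) (p : Fin n → ℝ≥0∞) (r : ℝ≥0∞) (s : ℕ)
    (T : TDist n) (lam : ℕ → ℂ) (A : ℕ → (Fin n → ℝ) → ℂ)
    (B : ℕ → Set (Fin n → ℝ)) : Prop :=
  (∀ i, IsAtomFn a p r s (A i) (B i)) ∧
    ∀ φ : SchwartzMap (Fin n → ℝ) ℂ,
      Filter.Tendsto (fun N => ∑ i ∈ Finset.range N, lam i * ∫ x, A i x * φ x)
        Filter.atTop (nhds (T φ))

/-- Membership in the anisotropic mixed-norm atomic Hardy space. -/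
def MemHardy {n : ℕ} (a : Fin n → ℝ) (p : Fin n → ℝ≥0∞) (r : ℝ≥0∞) (s : ℕ)
    (T : TDist n) : Prop :=
  ∃ lam A B, HasAtomicRep a p r s T lam A B

/-- The atomic Hardy space quasi-norm. -/
def hardyNorm {n : ℕ} (a : Fin n → ℝ) (p : Fin n → ℝ≥0∞) (r : ℝ≥0∞) (s : ℕ)
    (T : TDist n) : ℝ≥0∞ :=
  ⨅ (lam : ℕ → ℂ) (A : ℕ → (Fin n → ℝ) → ℂ) (B : ℕ → Set (Fin n → ℝ))
    (_ : HasAtomicRep a p r s T lam A B), atomSeqNorm p lam B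

/-- `‖L‖ = sup {|L f| : f ∈ H, ‖f‖_H ≤ 1}`. -/
def hardyOpNorm {n : ℕ} (a : Fin n → ℝ) (p : Fin n → ℝ≥0∞) (r : ℝ≥0∞) (s : ℕ)
    (L : TDist n → ℂ) : ℝ≥0∞ :=
  ⨆ T ∈ {T : TDist n | MemHardy a p r s T ∧ hardyNorm a p r s T ≤ 1}, (‖L T‖₊ : ℝ≥0∞)

/-- `P = Π_B f` is the natural projection of `f` onto polynomials of degree at most `s`
relative to `B`. -/
def IsProj {n : ℕ} (s : ℕ) (B : Set (Fin n → ℝ)) (f P : (Fin n → ℝ) → ℂ) : Prop :=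
  IsPolyDeg s P ∧ ∀ q : (Fin n → ℝ) → ℂ, IsPolyDeg s q →
    (∫ x in B, P x * q x) = ∫ x in B, f x * q x

lemma mixedNormF_succ {m : ℕ} (p : Fin (m + 1) → ℝ≥0∞) (hp : p 0 ≠ 0)
    (f : (Fin (m + 1) → ℝ) → ℝ≥0∞) :
    mixedNormF p f = mixedNormF (fun i => p i.succ)
      (fun y => eLpNorm (fun t => f (Fin.cons t y)) (p 0) volume) := by
  rw [mixedNormF]
  congr 1
  funext y
  split_ifs with htop
  · rw [htop, eLpNorm_exponent_top]
    rfl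
  · rw [eLpNorm_eq_lintegral_rpow_enorm_toReal hp htop]
    rfl

lemma indicator_univ_pi_cons {m : ℕ} (I : Fin (m + 1) → Set ℝ) (c : ℝ≥0∞) (t : ℝ)
    (y : Fin m → ℝ) :
    (Set.univ.pi I).indicator (fun _ => c) (Fin.cons t y : Fin (m + 1) → ℝ) =
      (I 0).indicator (fun _ => (Set.univ.pi fun i => I i.succ).indicator (fun _ => c) y) t := by
  by_cases h0 : t ∈ I 0 <;> by_cases hy : y ∈ Set.univ.pi fun i => I i.succ <;>
    simp_all [Fin.forall_fin_succ]

lemma mixedNormF_lt_top_of_le_indicator_pi {m : ℕ} (p : Fin m → ℝ≥0∞) (hp : ∀ i, p i ≠ 0)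
    (I : Fin m → Set ℝ) (hI : ∀ i, volume (I i) ≠ ∞) {c : ℝ≥0∞} (hc : c ≠ ∞)
    {f : (Fin m → ℝ) → ℝ≥0∞} (hf : ∀ x, f x ≤ (Set.univ.pi I).indicator (fun _ => c) x) :
    mixedNormF p f < ∞ := by
  induction m generalizing c with
  | zero => exact lt_of_le_of_lt (hf _) (by simpa using hc.lt_top)
  | succ m ih =>
    rw [mixedNormF_succ p (hp 0)]
    refine ih _ (fun i => hp i.succ) _ (fun i => hI i.succ)
      (c := c * volume (I 0) ^ (1 / (p 0).toReal))
      (ENNReal.mul_ne_top hc (ENNReal.rpow_ne_top_of_nonneg (by positivity) (hI 0))) fun y => ?_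
    calc eLpNorm (fun t => f (Fin.cons t y)) (p 0) volume
        ≤ eLpNorm ((I 0).indicator fun _ =>
            (Set.univ.pi fun i => I i.succ).indicator (fun _ => c) y) (p 0) volume :=
          eLpNorm_mono_enorm fun t => by simpa [← indicator_univ_pi_cons] using hf _
      _ ≤ _ := eLpNorm_indicator_const_le _ _
      _ = _ := by
          by_cases hy : y ∈ Set.univ.pi fun i => I i.succ <;> simp [hy]

section

variable {n : ℕ} {a : Fin n → ℝ}

/-- The function of `t` whose level set `{t > 0 | · = 1}` defines `anorm a z`. -/
def anormSum (a z : Fin n → ℝ) (t : ℝ) : ℝ := ∑ i, z i ^ 2 / t ^ (2 * a i)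

lemma anormSum_antitoneOn (ha : ∀ i, 0 ≤ a i) (z : Fin n → ℝ) :
    AntitoneOn (anormSum a z) (Set.Ioi 0) := fun t ht u _ htu =>
  Finset.sum_le_sum fun i _ => div_le_div_of_nonneg_left (sq_nonneg _)
    (Real.rpow_pos_of_pos ht _) (Real.rpow_le_rpow (le_of_lt ht) htu (by linarith [ha i]))

lemma continuousOn_anormSum (a z : Fin n → ℝ) : ContinuousOn (anormSum a z) (Set.Ioi 0) :=
  continuousOn_finsetSum _ fun _ _ => continuousOn_const.div
    (fun t ht => (Real.continuousAt_rpow_const t _ (Or.inl (ne_of_gt ht))).continuousWithinAt)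
    fun _ ht => (Real.rpow_pos_of_pos ht _).ne'

lemma anormSum_le_of_one_le (ha : ∀ i, 1 ≤ a i) (z : Fin n → ℝ) {t : ℝ} (ht : 1 ≤ t) :
    anormSum a z t ≤ (∑ i, z i ^ 2) / t ^ 2 := by
  rw [Finset.sum_div]
  refine Finset.sum_le_sum fun i _ => div_le_div_of_nonneg_left (sq_nonneg _) (by positivity) ?_
  rw [← Real.rpow_natCast]
  exact Real.rpow_le_rpow_of_exponent_le ht (by push_cast; linarith [ha i])

lemma le_anormSum_of_le_one (ha : ∀ i, 1 ≤ a i) (z : Fin n → ℝ) {t : ℝ} (ht : 0 < t)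
    (ht1 : t ≤ 1) : (∑ i, z i ^ 2) / t ^ 2 ≤ anormSum a z t := by
  rw [Finset.sum_div]
  refine Finset.sum_le_sum fun i _ =>
    div_le_div_of_nonneg_left (sq_nonneg _) (Real.rpow_pos_of_pos ht _) ?_
  rw [← Real.rpow_natCast]
  exact Real.rpow_le_rpow_of_exponent_ge ht ht1 (by push_cast; linarith [ha i])

lemma exists_anormSum_eq_one (ha : ∀ i, 1 ≤ a i) {z : Fin n → ℝ} (hz : z ≠ 0) :
    ∃ t, 0 < t ∧ anormSum a z t = 1 := by
  set S := ∑ i, z i ^ 2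
  have hS : 0 < S := by
    obtain ⟨j, hj⟩ := Function.ne_iff.mp hz
    have hj : z j ≠ 0 := by simpa using hj
    exact lt_of_lt_of_le (by positivity) (Finset.single_le_sum (f := fun i => z i ^ 2)
      (fun i _ => sq_nonneg _) (Finset.mem_univ j))
  set t₀ := min 1 S
  set t₁ := S + 1
  have ht₀ : 0 < t₀ := lt_min one_pos hS
  have ht₀₁ : t₀ ≤ t₁ := (min_le_right _ _).trans (by linarith)
  have hlow : anormSum a z t₁ ≤ 1 := by
    refine (anormSum_le_of_one_le ha z (by linarith)).trans ?_
    rw [div_le_one (by positivity)]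
    nlinarith
  have hhigh : 1 ≤ anormSum a z t₀ := by
    refine le_trans ?_ (le_anormSum_of_le_one ha z ht₀ (min_le_left _ _))
    rw [one_le_div (by positivity)]
    have : t₀ ≤ S := min_le_right _ _
    nlinarith [min_le_left 1 S]
  obtain ⟨t, ht, htF⟩ := intermediate_value_Icc' ht₀₁
    ((continuousOn_anormSum a z).mono fun t ht => lt_of_lt_of_le ht₀ ht.1) ⟨hlow, hhigh⟩
  exact ⟨t, lt_of_lt_of_le ht₀ ht.1, htF⟩

lemma anorm_nonneg (a z : Fin n → ℝ) : 0 ≤ anorm a z :=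
  Real.sInf_nonneg fun _ ht => ht.1.le

lemma anorm_lt_of_anormSum_lt (ha : ∀ i, 0 ≤ a i) {z : Fin n → ℝ} {t : ℝ} (ht : 0 < t)
    (h : anormSum a z t < 1) : anorm a z < t := by
  rcases Set.eq_empty_or_nonempty {u : ℝ | 0 < u ∧ ∑ i, z i ^ 2 / u ^ (2 * a i) = 1}
    with hempty | ⟨u, hu⟩
  · rwa [anorm, hempty, Real.sInf_empty]
  · -- the level set lies to the left of `t`, as `anormSum a z` is antitone
    have hut : u < t := by
      by_contra! htu
      have hu1 : anormSum a z u = 1 := hu.2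
      linarith [anormSum_antitoneOn ha z ht hu.1 htu]
    exact lt_of_le_of_lt (csInf_le ⟨0, fun _ hv => hv.1.le⟩ hu) hut

lemma sq_le_rpow_of_anorm_lt (ha : ∀ i, 1 ≤ a i) {z : Fin n → ℝ} {r : ℝ}
    (h : anorm a z < r) (i : Fin n) : z i ^ 2 ≤ r ^ (2 * a i) := by
  have hr : 0 < r := lt_of_le_of_lt (anorm_nonneg a z) h
  rcases eq_or_ne z 0 with rfl | hz
  · simpa using (Real.rpow_pos_of_pos hr _).le
  obtain ⟨t₀, ht₀, ht₀F⟩ := exists_anormSum_eq_one ha hz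
  have hbdd : BddBelow {u : ℝ | 0 < u ∧ ∑ i, z i ^ 2 / u ^ (2 * a i) = 1} :=
    ⟨0, fun _ hv => hv.1.le⟩
  obtain ⟨u, ⟨hu, huF⟩, hur⟩ := (csInf_lt_iff hbdd ⟨t₀, ht₀, ht₀F⟩).mp h
  have hterm : z i ^ 2 / u ^ (2 * a i) ≤ 1 :=
    huF ▸ Finset.single_le_sum (f := fun j => z j ^ 2 / u ^ (2 * a j))
      (fun j _ => by positivity) (Finset.mem_univ i)
  rw [div_le_one (Real.rpow_pos_of_pos hu _)] at hterm
  exact hterm.trans (Real.rpow_le_rpow hu.le hur.le (by linarith [ha i]))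

lemma aball_subset_pi_Icc (ha : ∀ i, 1 ≤ a i) (x : Fin n → ℝ) (r : ℝ) :
    aball a x r ⊆ Set.univ.pi fun i => Set.Icc (x i - r ^ a i) (x i + r ^ a i) := by
  intro y hy i _
  have hr : 0 < r := lt_of_le_of_lt (anorm_nonneg a _) hy
  have hsq := sq_le_rpow_of_anorm_lt ha hy i
  rw [mul_comm, Real.rpow_mul hr.le, Real.rpow_two, Pi.sub_apply] at hsq
  have := abs_le_of_sq_le_sq' hsq (Real.rpow_nonneg hr.le _)
  constructor <;> linarith [this.1, this.2]

lemma aball_mem_nhds (ha : ∀ i, 0 ≤ a i) (x : Fin n → ℝ) {r : ℝ} (hr : 0 < r) :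
    aball a x r ∈ nhds x := by
  have hcont : Continuous fun y : Fin n → ℝ => anormSum a (y - x) (r / 2) := by
    unfold anormSum; fun_prop
  have hx : anormSum a (x - x) (r / 2) < 1 := by simp [anormSum]
  filter_upwards [hcont.continuousAt.eventually (gt_mem_nhds hx)] with y hy
  exact (anorm_lt_of_anormSum_lt ha (half_pos hr) hy).trans (half_lt_self hr)

lemma volume_aball_lt_top (ha : ∀ i, 1 ≤ a i) (x : Fin n → ℝ) (r : ℝ) :
    volume (aball a x r) < ∞ :=
  (measure_mono (aball_subset_pi_Icc ha x r)).trans_lt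
    (isCompact_univ_pi fun _ => isCompact_Icc).measure_lt_top

lemma volume_aball_pos (ha : ∀ i, 0 ≤ a i) (x : Fin n → ℝ) {r : ℝ} (hr : 0 < r) :
    0 < volume (aball a x r) :=
  Measure.measure_pos_of_mem_nhds volume (aball_mem_nhds ha x hr)

lemma chiNorm_aball_lt_top (ha : ∀ i, 1 ≤ a i) {p : Fin n → ℝ≥0∞} (hp : ∀ i, p i ≠ 0)
    (x : Fin n → ℝ) (r : ℝ) : chiNorm p (aball a x r) < ∞ :=
  mixedNormF_lt_top_of_le_indicator_pi p hp _ (fun _ => by simp [Real.volume_Icc])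
    one_ne_top fun _ => Set.indicator_le_indicator_of_subset (aball_subset_pi_Icc ha x r)
      (fun _ => zero_le) _

lemma aball_mono {x : Fin n → ℝ} {r r' : ℝ} (h : r ≤ r') : aball a x r ⊆ aball a x r' :=
  fun _ hy => lt_of_lt_of_le hy h

lemma iUnion_aball_eq_univ (a x : Fin n → ℝ) : ⋃ k : ℕ, aball a x (k + 1) = Set.univ :=
  Set.eq_univ_of_forall fun y => Set.mem_iUnion.mpr <| by
    obtain ⟨k, hk⟩ := exists_nat_gt (anorm a (y - x))
    exact ⟨k, hk.trans (lt_add_one _)⟩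

def evalReal (n : ℕ) : MvPolynomial (Fin n) ℂ →ₗ[ℂ] (Fin n → ℝ) → ℂ :=
  LinearMap.pi fun x => (MvPolynomial.aeval fun i => (x i : ℂ)).toLinearMap

def polyDegSubmodule (n s : ℕ) : Submodule ℂ ((Fin n → ℝ) → ℂ) :=
  (MvPolynomial.restrictTotalDegree (Fin n) ℂ s).map (evalReal n)

instance (n s : ℕ) : FiniteDimensional ℂ (polyDegSubmodule n s) :=
  Module.Finite.map _ _

lemma mem_polyDegSubmodule {s : ℕ} {P : (Fin n → ℝ) → ℂ} :
    P ∈ polyDegSubmodule n s ↔ IsPolyDeg s P := by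
  constructor
  · rintro ⟨Q, hQ, rfl⟩
    exact ⟨Q, (MvPolynomial.mem_restrictTotalDegree _ _ _).mp hQ, fun x => rfl⟩
  · rintro ⟨Q, hQ, hPQ⟩
    exact ⟨Q, (MvPolynomial.mem_restrictTotalDegree _ _ _).mpr hQ, funext fun x => (hPQ x).symm⟩

lemma IsPolyDeg.analyticOnNhd {s : ℕ} {P : (Fin n → ℝ) → ℂ} (hP : IsPolyDeg s P) :
    AnalyticOnNhd ℝ P Set.univ := by
  obtain ⟨Q, -, hQ⟩ := hP
  have hQ' : P = fun x => MvPolynomial.eval (fun i => (x i : ℂ)) Q := funext hQ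
  subst hQ'
  let f : (Fin n → ℝ) →L[ℝ] Fin n → ℂ :=
    ContinuousLinearMap.pi fun i => Complex.ofRealCLM.comp (ContinuousLinearMap.proj i)
  exact AnalyticOnNhd.eval_continuousLinearMap f Q

lemma IsPolyDeg.continuous {s : ℕ} {P : (Fin n → ℝ) → ℂ} (hP : IsPolyDeg s P) :
    Continuous P :=
  continuousOn_univ.mp hP.analyticOnNhd.continuousOn

lemma IsPolyDeg.eq_of_ae_eq {s t : ℕ} {P Q : (Fin n → ℝ) → ℂ} (hP : IsPolyDeg s P)
    (hQ : IsPolyDeg t Q) {U : Set (Fin n → ℝ)} {x : Fin n → ℝ} (hU : U ∈ nhds x)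
    (h : P =ᵐ[volume.restrict U] Q) : P = Q := by
  have hint : Set.EqOn P Q (interior U) :=
    Measure.eqOn_open_of_ae_eq (ae_mono (Measure.restrict_mono interior_subset le_rfl) h)
      isOpen_interior hP.continuous.continuousOn hQ.continuous.continuousOn
  exact hP.analyticOnNhd.eq_of_eventuallyEq hQ.analyticOnNhd <|
    Filter.eventually_of_mem (interior_mem_nhds.mpr hU) hint

end

section

variable {α E : Type*} [MeasurableSpace α] {μ : Measure α} [NormedAddCommGroup E] {q : ℝ≥0∞}

/-- Finite-dimensional subspaces of `Lp` are closed. -/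
lemma exists_mem_ae_eq_of_forall_eLpNorm_sub_lt {𝕜 : Type*} [NontriviallyNormedField 𝕜]
    [CompleteSpace 𝕜] [NormedSpace 𝕜 E] [Fact (1 ≤ q)] (V : Submodule 𝕜 (α → E))
    [FiniteDimensional 𝕜 V] (hV : ∀ v ∈ V, MemLp v q μ) {g : α → E} (hg : MemLp g q μ)
    (h : ∀ ε : ℝ≥0∞, 0 < ε → ∃ v ∈ V, eLpNorm (g - v) q μ < ε) :
    ∃ v ∈ V, g =ᵐ[μ] v := by
  let toLp : V →ₗ[𝕜] Lp E q μ :=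
    { toFun := fun v => (hV v v.2).toLp v
      map_add' := fun v w => MemLp.toLp_add _ _
      map_smul' := fun c v => MemLp.toLp_const_smul c _ }
  have hclosed : IsClosed (LinearMap.range toLp : Set (Lp E q μ)) :=
    Submodule.closed_of_finiteDimensional _
  have hmem : hg.toLp g ∈ closure (LinearMap.range toLp : Set (Lp E q μ)) := by
    refine Metric.mem_closure_iff.mpr fun ε hε => ?_
    obtain ⟨v, hv, hlt⟩ := h (ENNReal.ofReal ε) (ENNReal.ofReal_pos.mpr hε)
    refine ⟨toLp ⟨v, hv⟩, LinearMap.mem_range_self _ _, ?_⟩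
    rw [dist_eq_norm]
    change ‖hg.toLp g - (hV v hv).toLp v‖ < ε
    rw [← MemLp.toLp_sub, Lp.norm_toLp]
    exact ENNReal.toReal_lt_of_lt_ofReal hlt
  obtain ⟨⟨v, hv⟩, hgv⟩ := LinearMap.mem_range.mp (hclosed.closure_eq ▸ hmem)
  refine ⟨v, hv, (hg.coeFn_toLp.symm.trans ?_)⟩
  rw [← hgv]
  exact (hV v hv).coeFn_toLp

def avgLpNorm (μ : Measure α) (q : ℝ≥0∞) (B : Set α) (f : α → E) : ℝ≥0∞ :=
  if q = ∞ then essSup (fun x => (‖f x‖₊ : ℝ≥0∞)) (μ.restrict B)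
  else ((μ B)⁻¹ * ∫⁻ x in B, (‖f x‖₊ : ℝ≥0∞) ^ q.toReal ∂μ) ^ (1 / q.toReal)

lemma eLpNorm_restrict_eq_mul_avgLpNorm (hq : q ≠ 0) {B : Set α} (hB : μ B ≠ 0)
    (hB' : μ B ≠ ∞) (f : α → E) :
    eLpNorm f q (μ.restrict B) = μ B ^ (1 / q.toReal) * avgLpNorm μ q B f := by
  unfold avgLpNorm
  split_ifs with htop
  · simp [htop, eLpNorm_exponent_top, eLpNormEssSup, enorm_eq_nnnorm]
  · rw [eLpNorm_eq_lintegral_rpow_enorm_toReal hq htop,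
      ← ENNReal.mul_rpow_of_nonneg _ _ (by positivity), ← mul_assoc,
      ENNReal.mul_inv_cancel hB hB', one_mul]
    rfl

lemma avgLpNorm_eq_zero (hq : q ≠ 0) {B : Set α} {f : α → E} (hf : f =ᵐ[μ.restrict B] 0) :
    avgLpNorm μ q B f = 0 := by
  unfold avgLpNorm
  split_ifs with htop
  · refine le_antisymm (essSup_le_of_ae_le _ ?_) zero_le
    filter_upwards [hf] with x hx
    simp [hx]
  · have hq' : 0 < q.toReal := ENNReal.toReal_pos hq htop
    have hzero : ∫⁻ x in B, (‖f x‖₊ : ℝ≥0∞) ^ q.toReal ∂μ = 0 := by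
      rw [lintegral_congr_ae (g := 0) (by filter_upwards [hf] with x hx; simp [hx, hq'])]
      exact lintegral_zero
    simp [hzero, hq']

end

section

variable {n : ℕ} {a : Fin n → ℝ} {p : Fin n → ℝ≥0∞} {q : ℝ≥0∞} {s : ℕ}
  {g : (Fin n → ℝ) → ℂ}

lemma campanatoNorm_eq_iSup_avgLpNorm :
    campanatoNorm a p q s g = ⨆ B ∈ aballs a, ⨅ P ∈ {P : (Fin n → ℝ) → ℂ | IsPolyDeg s P},
      volume B / chiNorm p B * avgLpNorm volume q B (g - P) :=
  rfl

lemma exists_avgLpNorm_lt_of_campanatoNorm_eq_zero (h : campanatoNorm a p q s g = 0)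
    {B : Set (Fin n → ℝ)} (hB : B ∈ aballs a) (hc : volume B / chiNorm p B ≠ 0) {δ : ℝ≥0∞}
    (hδ : δ ≠ 0) : ∃ P, IsPolyDeg s P ∧ avgLpNorm volume q B (g - P) < δ := by
  have hlt : (⨅ P ∈ {P : (Fin n → ℝ) → ℂ | IsPolyDeg s P},
      volume B / chiNorm p B * avgLpNorm volume q B (g - P)) < volume B / chiNorm p B * δ :=
    calc _ ≤ campanatoNorm a p q s g := by
          rw [campanatoNorm_eq_iSup_avgLpNorm]
          exact le_biSup (fun B => ⨅ P ∈ {P : (Fin n → ℝ) → ℂ | IsPolyDeg s P},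
            volume B / chiNorm p B * avgLpNorm volume q B (g - P)) hB
      _ = 0 := h
      _ < _ := ENNReal.mul_pos hc hδ
  simp only [iInf_lt_iff] at hlt
  obtain ⟨P, hP, hPlt⟩ := hlt
  exact ⟨P, hP, lt_of_mul_lt_mul_left' hPlt⟩

lemma exists_isPolyDeg_ae_eq_on_aball (ha : ∀ i, 1 ≤ a i) (hp : ∀ i, p i ≠ 0) (hq : 1 ≤ q)
    (hg : LocLp q g) (h : campanatoNorm a p q s g = 0) (x : Fin n → ℝ) {r : ℝ} (hr : 0 < r) :
    ∃ P, IsPolyDeg s P ∧ g =ᵐ[volume.restrict (aball a x r)] P := by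
  have : Fact (1 ≤ q) := ⟨hq⟩
  have hq0 : q ≠ 0 := (zero_lt_one.trans_le hq).ne'
  set B := aball a x r
  have hB0 : volume B ≠ 0 := (volume_aball_pos (fun i => zero_le_one.trans (ha i)) x hr).ne'
  have hBtop : volume B ≠ ∞ := (volume_aball_lt_top ha x r).ne
  have : IsFiniteMeasure (volume.restrict B) := isFiniteMeasure_restrict.mpr hBtop
  set K := Set.univ.pi fun i => Set.Icc (x i - r ^ a i) (x i + r ^ a i)
  have hK : IsCompact K := isCompact_univ_pi fun _ => isCompact_Icc
  have hBK : volume.restrict B ≤ volume.restrict K :=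
    Measure.restrict_mono (aball_subset_pi_Icc ha x r) le_rfl
  have hpoly : ∀ P ∈ polyDegSubmodule n s, MemLp P q (volume.restrict B) := by
    intro P hP
    have hPc := (mem_polyDegSubmodule.mp hP).continuous
    obtain ⟨C, hC⟩ := hK.exists_bound_of_continuousOn hPc.continuousOn
    exact MemLp.of_bound hPc.aestronglyMeasurable C
      (ae_mono hBK (ae_restrict_of_forall_mem hK.measurableSet hC))
  obtain ⟨P, hP, hgP⟩ := exists_mem_ae_eq_of_forall_eLpNorm_sub_lt _ hpoly
    ((hg K hK).mono_measure hBK) fun ε hε => by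
      have hc : volume B ^ (1 / q.toReal) ≠ ∞ :=
        ENNReal.rpow_ne_top_of_nonneg (by positivity) hBtop
      obtain ⟨P, hP, hPlt⟩ := exists_avgLpNorm_lt_of_campanatoNorm_eq_zero h ⟨x, r, hr, rfl⟩
        (ENNReal.div_pos hB0 (chiNorm_aball_lt_top ha hp x r).ne).ne'
        (ENNReal.div_pos hε.ne' hc).ne'
      refine ⟨P, mem_polyDegSubmodule.mpr hP, ?_⟩
      rw [eLpNorm_restrict_eq_mul_avgLpNorm hq0 hB0 hBtop]
      exact ENNReal.mul_lt_of_lt_div' hPlt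
  exact ⟨P, mem_polyDegSubmodule.mp hP, hgP⟩

end

theorem statement14_general {n : ℕ} (a : Fin n → ℝ) (ha : ∀ i, 1 ≤ a i)
    (p : Fin n → ℝ≥0∞) (hp0 : ∀ i, 0 < p i) (q : ℝ≥0∞) (hq : 1 ≤ q) (s : ℕ)
    (g : (Fin n → ℝ) → ℂ) (hg : LocLp q g) :
    campanatoNorm a p q s g = 0 ↔
      ∃ P, IsPolyDeg s P ∧ ∀ᵐ x ∂(volume : Measure (Fin n → ℝ)), g x = P x := by
  constructor
  · intro h
    choose P hP hgP using fun k : ℕ => exists_isPolyDeg_ae_eq_on_aball ha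
      (fun i => (hp0 i).ne') hq hg h 0 (Nat.cast_add_one_pos k)
    have hU := aball_mem_nhds (fun i => zero_le_one.trans (ha i)) 0 one_pos
    have hUk (k : ℕ) : volume.restrict (aball a 0 1) ≤ volume.restrict (aball a 0 (k + 1)) :=
      Measure.restrict_mono (aball_mono (le_add_of_nonneg_left k.cast_nonneg)) le_rfl
    have hPk (k : ℕ) : P k = P 0 := (hP k).eq_of_ae_eq (hP 0) hU <|
      ((hgP k).filter_mono (ae_mono (hUk k))).symm.trans ((hgP 0).filter_mono (ae_mono (hUk 0)))
    have hae := (ae_restrict_iUnion_iff (fun k : ℕ => aball a 0 (k + 1)) _).mpr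
      fun k => hPk k ▸ hgP k
    rw [iUnion_aball_eq_univ, Measure.restrict_univ] at hae
    exact ⟨P 0, hP 0, hae⟩
  · rintro ⟨P, hP, hgP⟩
    rw [campanatoNorm_eq_iSup_avgLpNorm]
    refine le_antisymm (iSup₂_le fun B _ => (iInf₂_le P hP).trans_eq ?_) zero_le
    rw [avgLpNorm_eq_zero (f := g - P) (zero_lt_one.trans_le hq).ne'
      (ae_restrict_of_ae (hgP.mono fun x hx => sub_eq_zero.mpr hx)), mul_zero]

theorem statement14 {n : ℕ} (hn : 0 < n) (a : Fin n → ℝ) (ha : ∀ i, 1 ≤ a i)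
    (p : Fin n → ℝ≥0∞) (hp0 : ∀ i, 0 < p i) (q : ℝ≥0∞) (hq : 1 ≤ q) (s : ℕ)
    (g : (Fin n → ℝ) → ℂ) (hg : LocLp q g) :
    campanatoNorm a p q s g = 0 ↔
      ∃ P, IsPolyDeg s P ∧ ∀ᵐ x ∂(volume : Measure (Fin n → ℝ)), g x = P x :=
  statement14_general a ha p hp0 q hq s g hg
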